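/- For every integer m ≥ 1 and every complex number z with Re(z) > 0, the series ∑_{k=m}^{∞} c(k,m)/((z+1)(z+2)⋯(z+k)) converges and its sum equals z^{−m}. -/

import Mathlib

/-- The Stirling cycle number `c(n,k)`: the number of permutations of an
`n`-element set whose decomposition into disjoint cycles (counting fixed
points as cycles) consists of exactly `k` cycles. -/
noncomputable def stirlingCycle (n k : ℕ) : ℕ :=
  Nat.card {σ : Equiv.Perm (Fin n) //
    σ.cycleType.card + Nat.card {x : Fin n // σ x = x} = k}

/-!
Inserting a new point into a permutation of `n` points either makes it a new fixed point or
places it right after one of the `n` old points in that point's cycle, so the cycle numbers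
obey `c(n+1,k+1) = c(n,k) + n c(n,k+1)` and coincide with `Nat.stirlingFirst`.

With `P_k = (z+1)⋯(z+k)`, this recurrence and `P_{k+1} = P_k (z+k+1)` make `z` times the partial
sum for `m+1` telescope into the partial sum for `m` minus `N c(N,m+1)/P_N`, so induction on `m`
from the trivial case `m = 0` reduces the theorem to the vanishing of this remainder. Comparing
the coefficient of `x^(m+1)` in `x(x+1)⋯(x+N-1) = ∑ c(N,j) x^j` bounds the remainder, for any
`0 < x < Re z`, by a constant times `∏_{i<N} (x+1+i)/(Re z+1+i)`, which decays like
`N^(x - Re z)` by Euler's limit formula for `Γ`.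
-/

open Filter Finset Topology

namespace Equiv.Perm

variable {α : Type*} [DecidableEq α] [Fintype α]

noncomputable def numCycles (σ : Perm α) : ℕ :=
  Multiset.card σ.cycleType + Nat.card {x // σ x = x}

theorem IsCycle.swap_mul_of_apply_eq_self {c : Perm α} (hc : c.IsCycle) {a b : α}
    (ha : c a = a) (hb : c b ≠ b) : (swap a b * c).IsCycle := by
  have hab : a ≠ b := by rintro rfl; exact hb ha
  have hgb : (swap a b * c) a = b := by simp [ha]
  have hsame : SameCycle (swap a b * c) a b := ⟨1, by simpa using hgb⟩
  have hca : ∀ {x}, c x ≠ x → c x ≠ a := fun hx h => hx (c.injective (h.trans ha.symm) ▸ h)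
  -- following the `c`-orbit of `b`, the new permutation agrees with `c` until it returns to `a`
  have horbit : ∀ k : ℕ, SameCycle (swap a b * c) a ((c ^ k) b) := by
    intro k
    induction k with
    | zero => simpa using hsame
    | succ k ih =>
      have hk : c ((c ^ k) b) ≠ (c ^ k) b := by
        simpa using (pow_apply_mem_support (n := k)).2 (mem_support.2 hb)
      rw [pow_succ', Perm.mul_apply]
      by_cases hkb : c ((c ^ k) b) = b
      · rwa [hkb]
      · have : (swap a b * c) ((c ^ k) b) = c ((c ^ k) b) := by
          simp [swap_apply_of_ne_of_ne (hca hk) hkb]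
        exact this ▸ ih.apply_right
  refine ⟨a, by rw [hgb]; exact hab.symm, fun y hy => ?_⟩
  by_cases hya : y = a
  · exact hya ▸ SameCycle.refl _ _
  have hcy : c y ≠ y := fun h => hy <| by
    have hyb : y ≠ b := fun hyb => hb (hyb ▸ h)
    simp [h, swap_apply_of_ne_of_ne hya hyb]
  obtain ⟨k, -, -, rfl⟩ := (hc.sameCycle hb hcy).exists_pow_eq c
  exact horbit k

theorem disjoint_swap_of_apply_eq_self {σ : Perm α} {a b : α} (hab : a ≠ b) (ha : σ a = a)
    (hb : σ b = b) : Disjoint (swap a b) σ := by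
  rw [disjoint_iff_disjoint_support, support_swap hab, disjoint_insert_left,
    disjoint_singleton_left]
  simp [ha, hb]

theorem card_cycleType_swap_mul_of_apply_eq_self {σ : Perm α} {a b : α} (hab : a ≠ b)
    (ha : σ a = a) (hb : σ b = b) :
    Multiset.card (swap a b * σ).cycleType = Multiset.card σ.cycleType + 1 := by
  rw [(disjoint_swap_of_apply_eq_self hab ha hb).cycleType_mul, (isCycle_swap hab).cycleType]
  simp [add_comm]

theorem card_cycleType_swap_mul_of_apply_ne_self {σ : Perm α} {a b : α} (ha : σ a = a)
    (hb : σ b ≠ b) : Multiset.card (swap a b * σ).cycleType = Multiset.card σ.cycleType := by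
  have hab : a ≠ b := by rintro rfl; exact hb ha
  set c := σ.cycleOf b
  have hc : c ∈ σ.cycleFactorsFinset := cycleOf_mem_cycleFactorsFinset_iff.2 (mem_support.2 hb)
  have hca : c a = a := by simp [c, cycleOf_apply, ha]
  have hcb : c b ≠ b := by simpa [c] using hb
  set τ := σ * c⁻¹
  have hτc : Disjoint τ c := disjoint_mul_inv_of_mem_cycleFactorsFinset hc
  have hτa : τ a = a := by
    rw [show τ a = σ (c⁻¹ a) from rfl, inv_eq_iff_eq.2 hca.symm, ha]
  have hτb : τ b = b := (hτc b).resolve_right hcb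
  have hswap : Disjoint (swap a b) τ := disjoint_swap_of_apply_eq_self hab hτa hτb
  have hσ : σ = τ * c := (inv_mul_cancel_right σ c).symm
  rw [hσ, ← mul_assoc, hswap.commute.eq, mul_assoc,
    (hswap.symm.mul_right hτc).cycleType_mul, hτc.cycleType_mul,
    ((isCycle_cycleOf σ hb).swap_mul_of_apply_eq_self hca hcb).cycleType,
    (isCycle_cycleOf σ hb).cycleType]
  simp

theorem filter_swap_mul_apply_eq_self {σ : Perm α} {a b : α} (hab : a ≠ b) (ha : σ a = a) :
    ({x | (swap a b * σ) x = x} : Finset α) = (({x | σ x = x} : Finset α).erase a).erase b := by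
  ext x
  simp only [mem_filter, mem_univ, true_and, mem_erase, Perm.mul_apply, swap_apply_eq_iff]
  by_cases hxa : x = a
  · subst hxa; simp [ha, hab]
  by_cases hxb : x = b
  · subst hxb; simpa [hab] using fun h => hab (σ.injective (ha.trans h.symm))
  · simp [swap_apply_of_ne_of_ne hxa hxb, hxa, hxb]

theorem numCycles_swap_mul {σ : Perm α} {a b : α} (hab : a ≠ b) (ha : σ a = a) :
    (swap a b * σ).numCycles + 1 = σ.numCycles := by
  simp only [numCycles, Nat.card_eq_fintype_card, Fintype.card_subtype,
    filter_swap_mul_apply_eq_self hab ha]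
  have haF : a ∈ ({x | σ x = x} : Finset α) := by simp [ha]
  rw [← card_erase_add_one haF]
  by_cases hb : σ b = b
  · have hbF : b ∈ (({x | σ x = x} : Finset α).erase a) := by simp [hb, hab.symm]
    rw [card_cycleType_swap_mul_of_apply_eq_self hab ha hb, ← card_erase_add_one hbF]
    ring
  · have hbF : b ∉ (({x | σ x = x} : Finset α).erase a) := by simp [hb]
    rw [card_cycleType_swap_mul_of_apply_ne_self ha hb, erase_eq_of_notMem hbF]
    ring

theorem numCycles_permCongr {β : Type*} [DecidableEq β] [Fintype β] (f : α ≃ β) (σ : Perm α) :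
    (f.permCongr σ).numCycles = σ.numCycles := by
  have hext : σ.extendDomain (f.trans (subtypeUnivEquiv fun _ => trivial).symm) = f.permCongr σ := by
    ext b
    rw [extendDomain_apply_subtype _ _ trivial]
    rfl
  have hfix : Nat.card {y // f.permCongr σ y = y} = Nat.card {x // σ x = x} :=
    (Nat.card_congr (f.subtypeEquiv fun x => by simp [permCongr_apply])).symm
  rw [numCycles, numCycles, ← hext, cycleType_extendDomain, hext, hfix]

theorem numCycles_optionCongr (e : Perm α) : numCycles e.optionCongr = e.numCycles + 1 := by
  have hext : e.optionCongr = e.extendDomain (optionIsSomeEquiv α).symm := by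
    refine Equiv.ext fun o => ?_
    cases o with
    | none => simp [extendDomain_apply_not_subtype]
    | some a => exact (extendDomain_apply_image e (optionIsSomeEquiv α).symm a).symm
  have hfix : Nat.card {o // e.optionCongr o = o} = Nat.card {x // e x = x} + 1 := by
    rw [Nat.card_eq_fintype_card, Nat.card_eq_fintype_card, Fintype.card_subtype,
      Fintype.card_subtype, card_filter, card_filter, Fintype.sum_option]
    simp [add_comm]
  rw [numCycles, numCycles, hfix, hext, cycleType_extendDomain, add_assoc]

theorem numCycles_decomposeOption_symm (o : Option α) (e : Perm α) :
    numCycles (decomposeOption.symm (o, e)) = e.numCycles + if o = none then 1 else 0 := by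
  rw [decomposeOption_symm_apply]
  cases o with
  | none => simpa [swap_self, ← Perm.one_def] using numCycles_optionCongr e
  | some p =>
    have := numCycles_swap_mul (σ := e.optionCongr) (a := none) (b := some p) (by simp) rfl
    rw [numCycles_optionCongr] at this
    simpa using this

theorem card_numCycles_option (k : ℕ) :
    Nat.card {σ : Perm (Option α) // σ.numCycles = k}
      = Fintype.card α * Nat.card {e : Perm α // e.numCycles = k}
        + Nat.card {e : Perm α // e.numCycles + 1 = k} := by
  rw [← Nat.card_congr (decomposeOption.symm.subtypeEquiv fun _ => Iff.rfl)]
  simp only [Nat.card_eq_fintype_card, Fintype.card_subtype, card_filter, Fintype.sum_prod_type,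
    Fintype.sum_option, numCycles_decomposeOption_symm]
  simp [add_comm]

end Equiv.Perm

theorem stirlingCycle_eq_card_numCycles (n k : ℕ) :
    stirlingCycle n k = Nat.card {σ : Equiv.Perm (Fin n) // σ.numCycles = k} :=
  rfl

theorem stirlingCycle_succ (n k : ℕ) :
    stirlingCycle (n + 1) k
      = n * stirlingCycle n k + Nat.card {e : Equiv.Perm (Fin n) // e.numCycles + 1 = k} := by
  rw [stirlingCycle_eq_card_numCycles, Nat.card_congr ((finSuccEquiv n).permCongr.subtypeEquiv
      (q := fun σ => σ.numCycles = k) fun σ => by rw [Equiv.Perm.numCycles_permCongr]),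
    Equiv.Perm.card_numCycles_option, Fintype.card_fin, stirlingCycle_eq_card_numCycles]

theorem stirlingCycle_eq_stirlingFirst (n k : ℕ) : stirlingCycle n k = n.stirlingFirst k := by
  induction n generalizing k with
  | zero =>
    have h : ∀ σ : Equiv.Perm (Fin 0), σ.numCycles = 0 := fun σ => by
      simp [Subsingleton.elim σ 1, Equiv.Perm.numCycles]
    cases k <;> simp [stirlingCycle_eq_card_numCycles, h]
  | succ n ih =>
    rw [stirlingCycle_succ]
    cases k with
    | zero => cases n <;> simp [ih]
    | succ k => simp [Nat.stirlingFirst_succ_succ, ← ih, stirlingCycle_eq_card_numCycles]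

theorem Nat.stirlingFirst_mul_pow_le_prod (n k : ℕ) {x : ℝ} (hx : 0 ≤ x) :
    (n.stirlingFirst k : ℝ) * x ^ k ≤ ∏ i ∈ range n, (x + i) := by
  induction n generalizing k with
  | zero => cases k <;> simp
  | succ n ih =>
    cases k with
    | zero => simpa using prod_nonneg fun i (_ : i ∈ range (n + 1)) => (by positivity : 0 ≤ x + i)
    | succ k =>
      rw [Nat.stirlingFirst_succ_succ, prod_range_succ]
      push_cast
      calc (n * n.stirlingFirst (k + 1) + n.stirlingFirst k : ℝ) * x ^ (k + 1)
          = n * (n.stirlingFirst (k + 1) * x ^ (k + 1)) + n.stirlingFirst k * x ^ k * x := by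
            ring
        _ ≤ n * ∏ i ∈ range n, (x + i) + (∏ i ∈ range n, (x + i)) * x := by
            gcongr
            exacts [ih _, ih _]
        _ = (∏ i ∈ range n, (x + i)) * (x + n) := by ring

theorem tendsto_prod_add_div_add_zero {a b : ℝ} (ha : 0 < a) (hab : a < b) :
    Tendsto (fun n : ℕ => ∏ i ∈ range n, (a + i) / (b + i)) atTop (𝓝 0) := by
  rw [← tendsto_add_atTop_iff_nat 1]
  -- Euler's limit formula: `∏_{i ≤ n} (a+i)/(b+i) = n^(a-b) * GammaSeq b n / GammaSeq a n`
  have hpow : Tendsto (fun n : ℕ => (n : ℝ) ^ (a - b)) atTop (𝓝 0) :=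
    ((neg_sub b a ▸ tendsto_rpow_neg_atTop (sub_pos.2 hab)).comp tendsto_natCast_atTop_atTop :)
  have hratio := (Real.GammaSeq_tendsto_Gamma b).div (Real.GammaSeq_tendsto_Gamma a)
    (Real.Gamma_pos_of_pos ha).ne'
  refine (zero_mul (Real.Gamma b / Real.Gamma a) ▸ hpow.mul hratio).congr'
    (eventually_atTop.2 ⟨1, fun n hn => ?_⟩)
  have hn : (0 : ℝ) < n := by exact_mod_cast hn
  have hb : 0 < b := ha.trans hab
  have hPa : ∏ i ∈ range (n + 1), (a + i) ≠ 0 := prod_ne_zero_iff.2 fun i _ => by positivity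
  have hPb : ∏ i ∈ range (n + 1), (b + i) ≠ 0 := prod_ne_zero_iff.2 fun i _ => by positivity
  simp only [Pi.div_apply, Real.GammaSeq, prod_div_distrib, Real.rpow_sub hn]
  field_simp

section
variable {z : ℂ}

theorem add_natCast_add_one_ne_zero (hz : 0 ≤ z.re) (i : ℕ) : z + (i + 1) ≠ 0 := fun h => by
  have := congrArg Complex.re h
  simp only [Complex.add_re, Complex.natCast_re, Complex.one_re, Complex.zero_re] at this
  linarith

theorem prod_add_natCast_add_one_ne_zero (hz : 0 ≤ z.re) (k : ℕ) : ∏ i ∈ range k, (z + (i + 1)) ≠ 0 :=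
  prod_ne_zero_iff.2 fun i _ => add_natCast_add_one_ne_zero hz i

theorem prod_re_add_natCast_add_one_le_norm_prod (hz : 0 ≤ z.re) (k : ℕ) :
    ∏ i ∈ range k, (z.re + (i + 1)) ≤ ‖∏ i ∈ range k, (z + (i + 1))‖ := by
  rw [norm_prod]
  refine prod_le_prod (fun i _ => by positivity) fun i _ => ?_
  simpa using Complex.re_le_norm (z + (i + 1))

theorem mul_stirlingFirst_div_prod_telescope (hz : 0 ≤ z.re) (m k : ℕ) :
    z * ((k + 1).stirlingFirst (m + 1) / ∏ i ∈ range (k + 1), (z + (i + 1)))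
      = k.stirlingFirst m / ∏ i ∈ range k, (z + (i + 1))
        + (k * k.stirlingFirst (m + 1) / ∏ i ∈ range k, (z + (i + 1))
          - (k + 1 : ℕ) * (k + 1).stirlingFirst (m + 1) / ∏ i ∈ range (k + 1), (z + (i + 1))) := by
  have hP := prod_add_natCast_add_one_ne_zero hz k
  have hzk := add_natCast_add_one_ne_zero hz k
  rw [prod_range_succ, Nat.stirlingFirst_succ_succ]
  field_simp
  push_cast
  ring

theorem mul_sum_stirlingFirst_div_prod (hz : 0 ≤ z.re) (m N : ℕ) :
    z * ∑ k ∈ range (N + 1), (k.stirlingFirst (m + 1) : ℂ) / ∏ i ∈ range k, (z + (i + 1))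
      = ∑ k ∈ range N, (k.stirlingFirst m : ℂ) / ∏ i ∈ range k, (z + (i + 1))
        - N * N.stirlingFirst (m + 1) / ∏ i ∈ range N, (z + (i + 1)) := by
  rw [sum_range_succ', mul_add, mul_sum, sum_congr rfl fun k _ =>
    mul_stirlingFirst_div_prod_telescope hz m k, sum_add_distrib,
    sum_range_sub' (fun k : ℕ => (k : ℂ) * k.stirlingFirst (m + 1) / ∏ i ∈ range k, (z + (i + 1)))]
  simp [sub_eq_add_neg]

theorem Nat.natCast_mul_stirlingFirst_le_prod (N m : ℕ) {x : ℝ} (hx : 0 < x) :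
    (N * N.stirlingFirst (m + 1) : ℝ) ≤ (x ^ m)⁻¹ * ∏ i ∈ range N, (x + 1 + i) := by
  rw [le_inv_mul_iff₀ (pow_pos hx m)]
  refine le_of_mul_le_mul_left ?_ hx
  calc x * (x ^ m * (N * N.stirlingFirst (m + 1)))
      = N * (N.stirlingFirst (m + 1) * x ^ (m + 1)) := by ring
    _ ≤ (x + N) * ∏ i ∈ range N, (x + i) := by
        gcongr
        · linarith
        · exact N.stirlingFirst_mul_pow_le_prod (m + 1) hx.le
    _ = x * ∏ i ∈ range N, (x + 1 + i) := by
        rw [mul_comm, ← prod_range_succ (fun i : ℕ => x + i), prod_range_succ']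
        push_cast
        simp only [add_zero, add_assoc, add_comm (1 : ℝ), mul_comm]

theorem tendsto_natCast_mul_stirlingFirst_div_prod (hz : 0 < z.re) (m : ℕ) :
    Tendsto (fun N : ℕ => N * N.stirlingFirst (m + 1) / ∏ i ∈ range N, (z + (i + 1)))
      atTop (𝓝 0) := by
  obtain ⟨x, hx, hxz⟩ := exists_between hz
  have hlim := (tendsto_prod_add_div_add_zero (a := x + 1) (b := z.re + 1) (by positivity)
    (by linarith)).const_mul (x ^ m)⁻¹
  rw [mul_zero] at hlim
  refine squeeze_zero_norm (fun N => ?_) hlim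
  have hD : 0 < ∏ i ∈ range N, (z.re + (i + 1)) := prod_pos fun i _ => by positivity
  calc ‖(N * N.stirlingFirst (m + 1) / ∏ i ∈ range N, (z + (i + 1)) : ℂ)‖
      = N * N.stirlingFirst (m + 1) / ‖∏ i ∈ range N, (z + (i + 1))‖ := by
        simp
    _ ≤ (x ^ m)⁻¹ * (∏ i ∈ range N, (x + 1 + i)) / ∏ i ∈ range N, (z.re + (i + 1)) :=
        div_le_div₀ (by positivity) (N.natCast_mul_stirlingFirst_le_prod m hx) hD
          (prod_re_add_natCast_add_one_le_norm_prod hz.le N)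
    _ = (x ^ m)⁻¹ * ∏ i ∈ range N, (x + 1 + i) / (z.re + 1 + i) := by
        rw [mul_div_assoc, prod_div_distrib]
        simp only [add_assoc, add_comm (1 : ℝ)]

theorem tendsto_sum_stirlingFirst_div_prod (hz : 0 < z.re) (m : ℕ) :
    Tendsto (fun N : ℕ => ∑ k ∈ range N, (k.stirlingFirst m : ℂ) / ∏ i ∈ range k, (z + (i + 1)))
      atTop (𝓝 (z ^ (-(m : ℤ)))) := by
  induction m with
  | zero => simp [← tendsto_add_atTop_iff_nat 1, sum_range_succ']
  | succ m ih =>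
    have hz0 : z ≠ 0 := fun h => by simp [h] at hz
    rw [← tendsto_add_atTop_iff_nat 1]
    have hlim := ih.sub (tendsto_natCast_mul_stirlingFirst_div_prod hz m)
    simp_rw [sub_zero, ← mul_sum_stirlingFirst_div_prod hz.le] at hlim
    convert hlim.const_mul z⁻¹ using 2
    · rw [inv_mul_cancel_left₀ hz0]
    · rw [Nat.cast_succ, neg_add, zpow_add₀ hz0, zpow_neg_one, mul_comm]
end

theorem stmt_14_general (m : ℕ) (z : ℂ) (hz : 0 < z.re) :
    Filter.Tendsto
      (fun N : ℕ => ∑ k ∈ Finset.Ico m N,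
        (stirlingCycle k m : ℂ) / ∏ i ∈ Finset.range k, (z + (i + 1)))
      Filter.atTop (nhds (z ^ (-(m : ℤ)))) := by
  have hsum : ∀ N : ℕ, ∑ k ∈ Ico m N, (stirlingCycle k m : ℂ) / ∏ i ∈ range k, (z + (i + 1))
      = ∑ k ∈ range N, (k.stirlingFirst m : ℂ) / ∏ i ∈ range k, (z + (i + 1)) := fun N => by
    simp_rw [stirlingCycle_eq_stirlingFirst]
    refine sum_subset (fun k hk => mem_range.2 (mem_Ico.1 hk).2) fun k hkN hk => ?_
    rw [Nat.stirlingFirst_eq_zero_of_lt, Nat.cast_zero, zero_div]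
    exact lt_of_not_ge fun hmk => hk (mem_Ico.2 ⟨hmk, mem_range.1 hkN⟩)
  simpa only [hsum] using tendsto_sum_stirlingFirst_div_prod hz m

/-- Stirling's identity for negative powers: for `m ≥ 1` and `Re z > 0`,
`∑_{k=m}^∞ c(k,m)/((z+1)(z+2)⋯(z+k)) = z^{-m}` (the series converges as the
limit of its partial sums). -/
theorem stmt_14 (m : ℕ) (hm : 1 ≤ m) (z : ℂ) (hz : 0 < z.re) :
    Filter.Tendsto
      (fun N : ℕ => ∑ k ∈ Finset.Ico m N,
        (stirlingCycle k m : ℂ) / ∏ i ∈ Finset.range k, (z + (i + 1)))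
      Filter.atTop (nhds (z ^ (-(m : ℤ)))) :=
  stmt_14_general m z hz
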